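/- arXiv:1906.10880 — 5 statements merged into one kernel-verified Lean document; each statement's English description precedes it below -/
import Mathlib

section
/- Let F : ℝ → ℝ be a smooth function of one variable p with F''(p) ≠ 0 everywhere, and suppose there exist constants A, B, C, K, L, M (not all zero) such that A·F(p)² + 2B·F(p)·p + C·p² + 2K·F(p) + 2L·p + M = 0 for all p (i.e., the graph of F lies on a conic). Then the Monge invariant vanishes identically: 9·F''(p)²·F⁗'(p) − 45·F''(p)·F'''(p)·F⁗(p) + 40·F'''(p)³ = 0 for all p, where F⁗' denotes the fifth derivative. -/
/-- The Monge invariant of a function `F` of one variable. -/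
noncomputable def monge (F : ℝ → ℝ) (p : ℝ) : ℝ :=
  9 * (iteratedDeriv 2 F p) ^ 2 * iteratedDeriv 5 F p
    - 45 * iteratedDeriv 2 F p * iteratedDeriv 3 F p * iteratedDeriv 4 F p
    + 40 * (iteratedDeriv 3 F p) ^ 3

/-- If the graph of a smooth function `F` with nowhere vanishing second derivative
lies on a conic, then its Monge invariant vanishes identically. -/
theorem monge_vanishes_of_conic (F : ℝ → ℝ) (hF : ContDiff ℝ (⊤ : ℕ∞) F)
    (hF2 : ∀ p : ℝ, iteratedDeriv 2 F p ≠ 0)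
    (A B C K L M : ℝ)
    (hne : ¬ (A = 0 ∧ B = 0 ∧ C = 0 ∧ K = 0 ∧ L = 0 ∧ M = 0))
    (hconic : ∀ p : ℝ,
      A * (F p) ^ 2 + 2 * B * F p * p + C * p ^ 2 + 2 * K * F p + 2 * L * p + M = 0) :
    ∀ p : ℝ, monge F p = 0 := by
  -- derivative of each iterated derivative
  have hd : ∀ (n : ℕ) (x : ℝ),
      HasDerivAt (iteratedDeriv n F) (iteratedDeriv (n + 1) F x) x := by
    intro n x
    rw [iteratedDeriv_succ]
    exact ((hF.differentiable_iteratedDeriv n (by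
      exact_mod_cast ENat.coe_lt_top n)).differentiableAt).hasDerivAt
  have hdF : ∀ x : ℝ, HasDerivAt F (iteratedDeriv 1 F x) x := by
    intro x
    simpa [iteratedDeriv_zero] using hd 0 x
  -- if a function is identically zero, any derivative value is zero
  have key : ∀ {g : ℝ → ℝ} {d x : ℝ}, (∀ y, g y = 0) → HasDerivAt g d x → d = 0 := by
    intro g d x hg hder
    have h1 := hder.deriv
    rw [funext hg] at h1
    simpa using h1.symm
  -- first derivative of the conic relation
  have h1 : ∀ x : ℝ, 2 * A * (F x * iteratedDeriv 1 F x)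
      + 2 * B * (iteratedDeriv 1 F x * x + F x) + 2 * C * x
      + 2 * K * iteratedDeriv 1 F x + 2 * L = 0 := by
    intro x
    refine key (x := x) hconic ?_
    have t := (((((((hdF x).pow 2).const_mul A).add
        ((((hdF x).const_mul (2*B)).mul (hasDerivAt_id' (x := x))))).add
        (((hasDerivAt_id' (x := x)).pow 2).const_mul C)).add
        ((hdF x).const_mul (2*K))).add
        ((hasDerivAt_id' (x := x)).const_mul (2*L))).add_const M
    refine HasDerivAt.congr_deriv t ?_
    push_cast
    ring
  have h2 : ∀ x : ℝ, 2 * A * (iteratedDeriv 1 F x ^ 2 + F x * iteratedDeriv 2 F x)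
      + 2 * B * (iteratedDeriv 2 F x * x + 2 * iteratedDeriv 1 F x) + 2 * C
      + 2 * K * iteratedDeriv 2 F x = 0 := by
    intro x
    refine key (x := x) h1 ?_
    have tA := ((hdF x).mul (hd 1 x)).const_mul (2*A)
    have tB := (((hd 1 x).mul (hasDerivAt_id' (x := x))).add (hdF x)).const_mul (2*B)
    have t := ((((tA.add tB).add ((hasDerivAt_id' (x := x)).const_mul (2*C))).add
        ((hd 1 x).const_mul (2*K))).add_const (2*L))
    refine HasDerivAt.congr_deriv t ?_
    push_cast
    ring
  have h3 : ∀ x : ℝ, 2 * A * (3 * (iteratedDeriv 1 F x * iteratedDeriv 2 F x)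
        + F x * iteratedDeriv 3 F x)
      + 2 * B * (iteratedDeriv 3 F x * x + 3 * iteratedDeriv 2 F x)
      + 2 * K * iteratedDeriv 3 F x = 0 := by
    intro x
    refine key (x := x) h2 ?_
    have tA := (((hd 1 x).pow 2).add ((hdF x).mul (hd 2 x))).const_mul (2*A)
    have tB := (((hd 2 x).mul (hasDerivAt_id' (x := x))).add
        ((hd 1 x).const_mul 2)).const_mul (2*B)
    have t := ((tA.add tB).add_const (2*C)).add ((hd 2 x).const_mul (2*K))
    refine HasDerivAt.congr_deriv t ?_
    push_cast
    ring
  have h4 : ∀ x : ℝ, 2 * A * (3 * iteratedDeriv 2 F x ^ 2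
        + 4 * (iteratedDeriv 1 F x * iteratedDeriv 3 F x) + F x * iteratedDeriv 4 F x)
      + 2 * B * (iteratedDeriv 4 F x * x + 4 * iteratedDeriv 3 F x)
      + 2 * K * iteratedDeriv 4 F x = 0 := by
    intro x
    refine key (x := x) h3 ?_
    have tA := ((((hd 1 x).mul (hd 2 x)).const_mul 3).add
        ((hdF x).mul (hd 3 x))).const_mul (2*A)
    have tB := (((hd 3 x).mul (hasDerivAt_id' (x := x))).add
        ((hd 2 x).const_mul 3)).const_mul (2*B)
    have t := (tA.add tB).add ((hd 3 x).const_mul (2*K))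
    refine HasDerivAt.congr_deriv t ?_
    push_cast
    ring
  have h5 : ∀ x : ℝ, 2 * A * (10 * (iteratedDeriv 2 F x * iteratedDeriv 3 F x)
        + 5 * (iteratedDeriv 1 F x * iteratedDeriv 4 F x) + F x * iteratedDeriv 5 F x)
      + 2 * B * (iteratedDeriv 5 F x * x + 5 * iteratedDeriv 4 F x)
      + 2 * K * iteratedDeriv 5 F x = 0 := by
    intro x
    refine key (x := x) h4 ?_
    have tA := (((((hd 2 x).pow 2).const_mul 3).add
        (((hd 1 x).mul (hd 3 x)).const_mul 4)).add ((hdF x).mul (hd 4 x))).const_mul (2*A)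
    have tB := (((hd 4 x).mul (hasDerivAt_id' (x := x))).add
        ((hd 3 x).const_mul 4)).const_mul (2*B)
    have t := (tA.add tB).add ((hd 4 x).const_mul (2*K))
    refine HasDerivAt.congr_deriv t ?_
    push_cast
    ring
  -- now conclude
  intro p
  by_cases hABK : A = 0 ∧ B = 0 ∧ K = 0
  · exfalso
    obtain ⟨hA, hB, hK⟩ := hABK
    have q0 := hconic 0
    have q1 := hconic 1
    have qm := hconic (-1)
    rw [hA, hB, hK] at q0 q1 qm
    exact hne ⟨hA, hB, by linarith, hK, by linarith, by linarith⟩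
  · have hv : (![A, B, K] : Fin 3 → ℝ) ≠ 0 := by
      intro h0
      exact hABK ⟨congrFun h0 0, congrFun h0 1, congrFun h0 2⟩
    set Mt : Matrix (Fin 3) (Fin 3) ℝ :=
      !![3 * iteratedDeriv 1 F p * iteratedDeriv 2 F p + F p * iteratedDeriv 3 F p,
         iteratedDeriv 3 F p * p + 3 * iteratedDeriv 2 F p, iteratedDeriv 3 F p;
         3 * iteratedDeriv 2 F p ^ 2 + 4 * iteratedDeriv 1 F p * iteratedDeriv 3 F p
           + F p * iteratedDeriv 4 F p,
         iteratedDeriv 4 F p * p + 4 * iteratedDeriv 3 F p, iteratedDeriv 4 F p;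
         10 * iteratedDeriv 2 F p * iteratedDeriv 3 F p
           + 5 * iteratedDeriv 1 F p * iteratedDeriv 4 F p + F p * iteratedDeriv 5 F p,
         iteratedDeriv 5 F p * p + 5 * iteratedDeriv 4 F p, iteratedDeriv 5 F p] with hMt
    have hmv : Mt.mulVec ![A, B, K] = 0 := by
      funext i
      fin_cases i <;>
        simp [Mt, Matrix.mulVec, dotProduct, Fin.sum_univ_three, -iteratedDeriv_one] <;>
        [linear_combination (h3 p) / 2; linear_combination (h4 p) / 2;
         linear_combination (h5 p) / 2]
    have hdet : Mt.det = 0 := Matrix.exists_mulVec_eq_zero_iff.mp ⟨![A, B, K], hv, hmv⟩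
    rw [Matrix.det_fin_three] at hdet
    simp [hMt, -iteratedDeriv_one, Matrix.cons_val_zero, Matrix.cons_val_one,
      Matrix.head_cons, Matrix.cons_val_two, Matrix.tail_cons] at hdet
    have h2p := hF2 p
    have : iteratedDeriv 2 F p * monge F p = 0 := by
      rw [monge]
      linear_combination -hdet
    rcases mul_eq_zero.mp this with h | h
    · exact absurd h h2p
    · exact h
end

section
/- Let F(p) = (a·p² + b·p + c)/(d·p + e) be a rational function with d·p + e ≠ 0 on an open interval. Then on that interval the Monge invariant of F vanishes: 9·F''² · F⁽⁵⁾ − 45·F''·F'''·F⁗ + 40·(F''')³ = 0. -/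
open Filter Topology

section AffineZPow

variable {𝕜 : Type*} [NontriviallyNormedField 𝕜]

theorem eventually_affine_ne_zero (d e : 𝕜) {x : 𝕜} (hx : d * x + e ≠ 0) :
    ∀ᶠ y in 𝓝 x, d * y + e ≠ 0 :=
  (continuous_const.mul continuous_id |>.add continuous_const).continuousAt.eventually_ne hx

theorem hasDerivAt_affine (d e x : 𝕜) : HasDerivAt (fun y => d * y + e) d x := by
  simpa using ((hasDerivAt_id x).const_mul d).add_const e

theorem hasDerivAt_affine_zpow (d e : 𝕜) (m : ℤ) {x : 𝕜} (hx : d * x + e ≠ 0) :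
    HasDerivAt (fun y => (d * y + e) ^ m) (m * (d * x + e) ^ (m - 1) * d) x :=
  (hasDerivAt_zpow m _ (Or.inl hx)).comp x (hasDerivAt_affine d e x)

theorem iteratedDeriv_affine_zpow (d e : 𝕜) (m : ℤ) (k : ℕ) {x : 𝕜} (hx : d * x + e ≠ 0) :
    iteratedDeriv k (fun y => (d * y + e) ^ m) x
      = (∏ i ∈ Finset.range k, ((m : 𝕜) - i)) * d ^ k * (d * x + e) ^ (m - k) := by
  induction k generalizing x with
  | zero => simp
  | succ k ih =>
    have heq : iteratedDeriv k (fun y => (d * y + e) ^ m) =ᶠ[𝓝 x]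
        fun y => (∏ i ∈ Finset.range k, ((m : 𝕜) - i)) * d ^ k * (d * y + e) ^ (m - k) :=
      (eventually_affine_ne_zero d e hx).mono fun y hy => ih hy
    rw [iteratedDeriv_succ, heq.deriv_eq,
      ((hasDerivAt_affine_zpow d e (m - k) hx).const_mul _).deriv, Finset.prod_range_succ]
    push_cast
    ring_nf

end AffineZPow

theorem iteratedDeriv_add_two {𝕜 F : Type*} [NontriviallyNormedField 𝕜] [NormedAddCommGroup F]
    [NormedSpace 𝕜 F] (k : ℕ) (f : 𝕜 → F) :
    iteratedDeriv (k + 2) f = iteratedDeriv k (iteratedDeriv 2 f) := by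
  simp only [iteratedDeriv_eq_iterate, Function.iterate_add]
  rfl

theorem monge_eq_zero_of_iteratedDeriv_two_eq_zpow {F : ℝ → ℝ} {p C d e : ℝ}
    (hp : d * p + e ≠ 0) (hF : iteratedDeriv 2 F =ᶠ[𝓝 p] fun x => C * (d * x + e) ^ (-3 : ℤ)) :
    monge F p = 0 := by
  have hderiv (k : ℕ) : iteratedDeriv (k + 2) F p
      = C * ((∏ i ∈ Finset.range k, ((-3 : ℝ) - i)) * d ^ k * (d * p + e) ^ (-3 - k : ℤ)) := by
    rw [iteratedDeriv_add_two, hF.iteratedDeriv_eq, iteratedDeriv_const_mul_field,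
      iteratedDeriv_affine_zpow d e _ k hp]
    push_cast
    rfl
  simp only [monge, hderiv 0, hderiv 1, hderiv 2, hderiv 3]
  norm_num [Finset.prod_range_succ]
  field_simp
  ring

theorem iteratedDeriv_two_quadratic_div_linear (a b c d e : ℝ) {x : ℝ} (hx : d * x + e ≠ 0) :
    iteratedDeriv 2 (fun y => (a * y ^ 2 + b * y + c) / (d * y + e)) x
      = 2 * (a * e ^ 2 - b * d * e + c * d ^ 2) * (d * x + e) ^ (-3 : ℤ) := by
  have hF' : deriv (fun y => (a * y ^ 2 + b * y + c) / (d * y + e)) =ᶠ[𝓝 x]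
      fun y => (a * d * y ^ 2 + 2 * a * e * y + (b * e - c * d)) / (d * y + e) ^ 2 := by
    filter_upwards [eventually_affine_ne_zero d e hx] with y hy
    have hnum : HasDerivAt (fun y => a * y ^ 2 + b * y + c) (a * (2 * y) + b) y := by
      simpa using (((hasDerivAt_pow 2 y).const_mul a).add
        ((hasDerivAt_id y).const_mul b)).add_const c
    rw [(hnum.fun_div (hasDerivAt_affine d e y) hy).deriv]
    field_simp
    ring
  have hnum : HasDerivAt (fun y => a * d * y ^ 2 + 2 * a * e * y + (b * e - c * d))
      (a * d * (2 * x) + 2 * a * e) x := by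
    simpa using (((hasDerivAt_pow 2 x).const_mul (a * d)).add
      ((hasDerivAt_id x).const_mul (2 * a * e))).add_const (b * e - c * d)
  rw [iteratedDeriv_succ, iteratedDeriv_one, hF'.deriv_eq,
    (hnum.fun_div ((hasDerivAt_affine d e x).fun_pow 2) (pow_ne_zero 2 hx)).deriv,
    zpow_neg, zpow_ofNat]
  field_simp
  ring

theorem monge_vanishes_of_rational_general (a b c d e : ℝ) (I : Set ℝ)
    (hden : ∀ p ∈ I, d * p + e ≠ 0) :
    ∀ p ∈ I,
      monge (fun p => (a * p ^ 2 + b * p + c) / (d * p + e)) p = 0 := by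
  intro p hp
  refine monge_eq_zero_of_iteratedDeriv_two_eq_zpow (C := 2 * (a * e ^ 2 - b * d * e + c * d ^ 2))
    (hden p hp) ?_
  filter_upwards [eventually_affine_ne_zero d e (hden p hp)] with x hx
  exact iteratedDeriv_two_quadratic_div_linear a b c d e hx

/-- The Monge invariant of a quadratic-over-linear rational function vanishes
on any open interval where the denominator is nonzero. -/
theorem monge_vanishes_of_rational (a b c d e : ℝ) (I : Set ℝ) (hI : IsOpen I)
    (hden : ∀ p ∈ I, d * p + e ≠ 0) :
    ∀ p ∈ I,
      monge (fun p => (a * p ^ 2 + b * p + c) / (d * p + e)) p = 0 :=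
  monge_vanishes_of_rational_general a b c d e I hden
end

section
/- Let H(t, w₂) := w₂ · F'''(t)/F''(t), where F : ℝ → ℝ is smooth with F''(t) ≠ 0 everywhere. Then the Wünschmann expression for third-order ODEs w''' = H(t, w, w', w'') with H independent of w and w', namely W := −9 H H_{w₂} H_{w₂w₂} − 9 H_t H_{w₂w₂} + 18 H H_{t w₂ w₂} − 18 H_{w₂} H_{t w₂} + 9 H_{t t w₂} + 4 H_{w₂}³ + 9 H² H_{w₂ w₂ w₂}, equals (9 F''² F⁽⁵⁾ − 45 F'' F''' F'''' + 40 F'''³)/F''³, i.e., W(H) = Monge(F)/(F'')³. -/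
/-- Partial derivative in the first slot of a function of two real variables. -/
noncomputable def pt (H : ℝ → ℝ → ℝ) : ℝ → ℝ → ℝ := fun t w => deriv (fun s => H s w) t

/-- Partial derivative in the second slot of a function of two real variables. -/
noncomputable def pw (H : ℝ → ℝ → ℝ) : ℝ → ℝ → ℝ := fun t w => deriv (fun u => H t u) w

private lemma deriv_linear (a w : ℝ) : deriv (fun u : ℝ => u * a) w = a := by
  simpa using ((hasDerivAt_id w).mul_const a).deriv

/-- For `H(t,w₂) = w₂ F'''(t)/F''(t)`, the (reduced) Wünschmann expression equals
`Monge(F)/F''³`. -/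
theorem wunschmann_eq_monge_div_cube (F : ℝ → ℝ) (hF : ContDiff ℝ (⊤ : ℕ∞) F)
    (hF2 : ∀ t : ℝ, iteratedDeriv 2 F t ≠ 0) :
    ∀ t w2 : ℝ,
      (fun H : ℝ → ℝ → ℝ =>
        -9 * H t w2 * pw H t w2 * pw (pw H) t w2
          - 9 * pt H t w2 * pw (pw H) t w2
          + 18 * H t w2 * pw (pw (pt H)) t w2
          - 18 * pw H t w2 * pw (pt H) t w2
          + 9 * pw (pt (pt H)) t w2
          + 4 * (pw H t w2) ^ 3
          + 9 * (H t w2) ^ 2 * pw (pw (pw H)) t w2)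
        (fun t w2 => w2 * iteratedDeriv 3 F t / iteratedDeriv 2 F t)
      = monge F t / (iteratedDeriv 2 F t) ^ 3 := by
  intro t w2
  set D2 := iteratedDeriv 2 F with hD2def
  set D3 := iteratedDeriv 3 F with hD3def
  set D4 := iteratedDeriv 4 F with hD4def
  set D5 := iteratedDeriv 5 F with hD5def
  set Hf : ℝ → ℝ → ℝ := fun t w2 => w2 * D3 t / D2 t with hHf
  have diffD : ∀ n : ℕ, Differentiable ℝ (iteratedDeriv n F) := fun n =>
    hF.differentiable_iteratedDeriv n (by exact_mod_cast ENat.coe_lt_top n)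
  have hD : ∀ (n : ℕ) (x : ℝ), HasDerivAt (iteratedDeriv n F) (iteratedDeriv (n + 1) F x) x := by
    intro n x
    rw [iteratedDeriv_succ]
    exact ((diffD n) x).hasDerivAt
  -- pw Hf
  have hpwH : ∀ x u : ℝ, pw Hf x u = D3 x / D2 x := by
    intro x u
    have : (fun v : ℝ => Hf x v) = fun v : ℝ => v * (D3 x / D2 x) := by
      funext v; simp only [hHf]; ring
    simp only [pw, this, deriv_linear]
  -- pw pw Hf = 0
  have hpwpwH : pw (pw Hf) t w2 = 0 := by
    have : (fun v : ℝ => pw Hf t v) = fun _ : ℝ => D3 t / D2 t := by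
      funext v; exact hpwH t v
    have e : pw (pw Hf) t w2 = deriv (fun v : ℝ => pw Hf t v) w2 := rfl
    rw [e, this, deriv_const]
  have hpwpwpwH : pw (pw (pw Hf)) t w2 = 0 := by
    have h2 : ∀ x u : ℝ, pw (pw Hf) x u = 0 := by
      intro x u
      have : (fun v : ℝ => pw Hf x v) = fun _ : ℝ => D3 x / D2 x := by
        funext v; exact hpwH x v
      have e : pw (pw Hf) x u = deriv (fun v : ℝ => pw Hf x v) u := rfl
      rw [e, this, deriv_const]
    have h3 : (fun v : ℝ => pw (pw Hf) t v) = fun _ : ℝ => (0 : ℝ) := by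
      funext v; exact h2 t v
    have e : pw (pw (pw Hf)) t w2 = deriv (fun v : ℝ => pw (pw Hf) t v) w2 := rfl
    rw [e, h3, deriv_const]
  -- pt Hf
  have hptH : ∀ x u : ℝ, pt Hf x u = (u * D4 x * D2 x - u * D3 x * D3 x) / D2 x ^ 2 := by
    intro x u
    have hnum : HasDerivAt (fun s => u * D3 s) (u * D4 x) x := (hD 3 x).const_mul u
    have hdiv := hnum.fun_div (hD 2 x) (hF2 x)
    have : (fun s : ℝ => Hf s u) = fun s : ℝ => u * D3 s / D2 s := by
      funext s; simp only [hHf]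
    have e : pt Hf x u = deriv (fun s : ℝ => Hf s u) x := rfl
    rw [e, this, hdiv.deriv]
  -- pw pt Hf
  have hpwptH : ∀ x u : ℝ, pw (pt Hf) x u = (D4 x * D2 x - D3 x * D3 x) / D2 x ^ 2 := by
    intro x u
    have : (fun v : ℝ => pt Hf x v) =
        fun v : ℝ => v * ((D4 x * D2 x - D3 x * D3 x) / D2 x ^ 2) := by
      funext v; rw [hptH x v]; ring
    have e : pw (pt Hf) x u = deriv (fun v : ℝ => pt Hf x v) u := rfl
    rw [e, this, deriv_linear]
  have hpwpwptH : pw (pw (pt Hf)) t w2 = 0 := by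
    have : (fun v : ℝ => pw (pt Hf) t v) = fun _ : ℝ => (D4 t * D2 t - D3 t * D3 t) / D2 t ^ 2 := by
      funext v; exact hpwptH t v
    have e : pw (pw (pt Hf)) t w2 = deriv (fun v : ℝ => pw (pt Hf) t v) w2 := rfl
    rw [e, this, deriv_const]
  -- pt pt Hf
  have hptptH : ∀ x u : ℝ, pt (pt Hf) x u =
      u * (((D5 x * D2 x + D4 x * D3 x - (D4 x * D3 x + D3 x * D4 x)) * D2 x ^ 2
        - (D4 x * D2 x - D3 x * D3 x) * (2 * D2 x ^ 1 * D3 x)) / (D2 x ^ 2) ^ 2) := by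
    intro x u
    have hnum : HasDerivAt (fun s => D4 s * D2 s - D3 s * D3 s)
        (D5 x * D2 x + D4 x * D3 x - (D4 x * D3 x + D3 x * D4 x)) x :=
      ((hD 4 x).mul (hD 2 x)).sub ((hD 3 x).mul (hD 3 x))
    have hden : HasDerivAt (fun s => D2 s ^ 2) (2 * D2 x ^ 1 * D3 x) x := by
      simpa using (hD 2 x).fun_pow 2
    have hq := (hnum.fun_div hden (pow_ne_zero 2 (hF2 x))).const_mul u
    have : (fun s : ℝ => pt Hf s u) =
        fun s : ℝ => u * ((D4 s * D2 s - D3 s * D3 s) / D2 s ^ 2) := by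
      funext s; rw [hptH s u]; ring
    have e : pt (pt Hf) x u = deriv (fun s : ℝ => pt Hf s u) x := rfl
    rw [e, this, hq.deriv]
  have hpwptptH : pw (pt (pt Hf)) t w2 =
      ((D5 t * D2 t + D4 t * D3 t - (D4 t * D3 t + D3 t * D4 t)) * D2 t ^ 2
        - (D4 t * D2 t - D3 t * D3 t) * (2 * D2 t ^ 1 * D3 t)) / (D2 t ^ 2) ^ 2 := by
    have : (fun v : ℝ => pt (pt Hf) t v) =
        fun v : ℝ => v * (((D5 t * D2 t + D4 t * D3 t - (D4 t * D3 t + D3 t * D4 t)) * D2 t ^ 2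
          - (D4 t * D2 t - D3 t * D3 t) * (2 * D2 t ^ 1 * D3 t)) / (D2 t ^ 2) ^ 2) := by
      funext v; exact hptptH t v
    have e : pw (pt (pt Hf)) t w2 = deriv (fun v : ℝ => pt (pt Hf) t v) w2 := rfl
    rw [e, this, deriv_linear]
  show -9 * Hf t w2 * pw Hf t w2 * pw (pw Hf) t w2
          - 9 * pt Hf t w2 * pw (pw Hf) t w2
          + 18 * Hf t w2 * pw (pw (pt Hf)) t w2
          - 18 * pw Hf t w2 * pw (pt Hf) t w2
          + 9 * pw (pt (pt Hf)) t w2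
          + 4 * (pw Hf t w2) ^ 3
          + 9 * (Hf t w2) ^ 2 * pw (pw (pw Hf)) t w2
      = monge F t / D2 t ^ 3
  rw [hpwpwH, hpwpwpwH, hpwpwptH, hpwptptH, hpwH, hpwptH]
  simp only [monge, ← hD2def, ← hD3def, ← hD4def, ← hD5def]
  field_simp [hF2 t]
  ring
end

section
/- Let F = F(x,y,z,p) be smooth and define the 1-forms ω₀¹ := dz − p dx − F dy, ω₀² := dp, ω₀³ := dx, ω₀⁴ := dy on ℝ⁴. Then dω₀¹ ∧ ω₀¹ ∧ ω₀² = −(F_x + p F_z) · ω₀¹ ∧ ω₀² ∧ ω₀³ ∧ ω₀⁴. In particular, dω₀¹ ∧ ω₀¹ ∧ ω₀² = 0 identically if and only if F_x + p F_z ≡ 0. -/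
open Finset in
private lemma perm4_det (f g b c : Fin 4 → ℝ) :
    ∑ σ : Equiv.Perm (Fin 4), ((Equiv.Perm.sign σ : ℤ) : ℝ) * f (σ 0) * g (σ 1) * b (σ 2) * c (σ 3)
      = (Matrix.of fun i j => ![f, g, b, c] i j : Matrix (Fin 4) (Fin 4) ℝ).det := by
  rw [← Matrix.det_transpose, Matrix.det_apply]
  refine Finset.sum_congr rfl fun σ _ => ?_
  rw [Fin.prod_univ_four]
  simp only [Matrix.transpose_apply, Matrix.of_apply, Matrix.cons_val_zero, Matrix.cons_val_one,
    Matrix.head_cons, Matrix.cons_val_two, Matrix.tail_cons, Matrix.cons_val_three,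
    Units.smul_def, zsmul_eq_mul]
  ring

private lemma det4_expand (M : Matrix (Fin 4) (Fin 4) ℝ) : M.det =
    M 0 0 * (M 1 1 * (M 2 2 * M 3 3 - M 2 3 * M 3 2) - M 1 2 * (M 2 1 * M 3 3 - M 2 3 * M 3 1) + M 1 3 * (M 2 1 * M 3 2 - M 2 2 * M 3 1))
    - M 0 1 * (M 1 0 * (M 2 2 * M 3 3 - M 2 3 * M 3 2) - M 1 2 * (M 2 0 * M 3 3 - M 2 3 * M 3 0) + M 1 3 * (M 2 0 * M 3 2 - M 2 2 * M 3 0))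
    + M 0 2 * (M 1 0 * (M 2 1 * M 3 3 - M 2 3 * M 3 1) - M 1 1 * (M 2 0 * M 3 3 - M 2 3 * M 3 0) + M 1 3 * (M 2 0 * M 3 1 - M 2 1 * M 3 0))
    - M 0 3 * (M 1 0 * (M 2 1 * M 3 2 - M 2 2 * M 3 1) - M 1 1 * (M 2 0 * M 3 2 - M 2 2 * M 3 0) + M 1 2 * (M 2 0 * M 3 1 - M 2 1 * M 3 0)) := by
  rw [Matrix.det_succ_row_zero]
  simp [Fin.sum_univ_four, Matrix.det_fin_three, Matrix.submatrix_apply, Fin.succ_zero_eq_one,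
    Fin.succAbove, Fin.succ_one_eq_two,
    show (Fin.succ 2 : Fin 4) = 3 from rfl,
    show ((3 : Fin 4) : ℕ) = 3 from rfl,
    show (Fin.castSucc 2 : Fin 4) = 2 from rfl]
  norm_num
  ring

open Finset in
private lemma perm4' (f g b c : Fin 4 → ℝ) :
    ∑ σ : Equiv.Perm (Fin 4), ((Equiv.Perm.sign σ : ℤ) : ℝ) * f (σ 0) * g (σ 1) * b (σ 2) * c (σ 3)
      = f 0 * (g 1 * (b 2 * c 3 - b 3 * c 2) - g 2 * (b 1 * c 3 - b 3 * c 1) + g 3 * (b 1 * c 2 - b 2 * c 1))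
      - f 1 * (g 0 * (b 2 * c 3 - b 3 * c 2) - g 2 * (b 0 * c 3 - b 3 * c 0) + g 3 * (b 0 * c 2 - b 2 * c 0))
      + f 2 * (g 0 * (b 1 * c 3 - b 3 * c 1) - g 1 * (b 0 * c 3 - b 3 * c 0) + g 3 * (b 0 * c 1 - b 1 * c 0))
      - f 3 * (g 0 * (b 1 * c 2 - b 2 * c 1) - g 1 * (b 0 * c 2 - b 2 * c 0) + g 2 * (b 0 * c 1 - b 1 * c 0)) := by
  rw [perm4_det, det4_expand]
  simp only [Matrix.of_apply, Matrix.cons_val_zero, Matrix.cons_val_one, Matrix.head_cons,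
    Matrix.cons_val_two, Matrix.tail_cons, Matrix.cons_val_three]

open Finset in
private lemma key_alg (L : (ℝ × ℝ × ℝ × ℝ) → ℝ) (A B C D p Fv : ℝ)
    (hL : ∀ u : ℝ × ℝ × ℝ × ℝ, L u = A * u.1 + B * u.2.1 + C * u.2.2.1 + D * u.2.2.2)
    (v : Fin 4 → ℝ × ℝ × ℝ × ℝ) :
    (1 / 2 : ℝ) * ∑ σ : Equiv.Perm (Fin 4), ((Equiv.Perm.sign σ : ℤ) : ℝ) *
        ((-((v (σ 0)).2.2.2 * (v (σ 1)).1) - L (v (σ 0)) * (v (σ 1)).2.1)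
          - (-((v (σ 1)).2.2.2 * (v (σ 0)).1) - L (v (σ 1)) * (v (σ 0)).2.1))
        * ((v (σ 2)).2.2.1 - p * (v (σ 2)).1 - Fv * (v (σ 2)).2.1)
        * (v (σ 3)).2.2.2
    = -(A + p * C) * ∑ σ : Equiv.Perm (Fin 4), ((Equiv.Perm.sign σ : ℤ) : ℝ) *
        ((v (σ 0)).2.2.1 - p * (v (σ 0)).1 - Fv * (v (σ 0)).2.1)
        * (v (σ 1)).2.2.2 * (v (σ 2)).1 * (v (σ 3)).2.1 := by
  have E1 := perm4' (fun k => -((v k).2.2.2)) (fun k => (v k).1)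
      (fun k => (v k).2.2.1 - p * (v k).1 - Fv * (v k).2.1) (fun k => (v k).2.2.2)
  have E2 := perm4' (fun k => -(A * (v k).1 + B * (v k).2.1 + C * (v k).2.2.1 + D * (v k).2.2.2))
      (fun k => (v k).2.1)
      (fun k => (v k).2.2.1 - p * (v k).1 - Fv * (v k).2.1) (fun k => (v k).2.2.2)
  have E3 := perm4' (fun k => (v k).1) (fun k => (v k).2.2.2)
      (fun k => (v k).2.2.1 - p * (v k).1 - Fv * (v k).2.1) (fun k => (v k).2.2.2)
  have E4 := perm4' (fun k => (v k).2.1)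
      (fun k => A * (v k).1 + B * (v k).2.1 + C * (v k).2.2.1 + D * (v k).2.2.2)
      (fun k => (v k).2.2.1 - p * (v k).1 - Fv * (v k).2.1) (fun k => (v k).2.2.2)
  have E5 := perm4' (fun k => (v k).2.2.1 - p * (v k).1 - Fv * (v k).2.1)
      (fun k => (v k).2.2.2) (fun k => (v k).1) (fun k => (v k).2.1)
  have hsum : (∑ σ : Equiv.Perm (Fin 4), ((Equiv.Perm.sign σ : ℤ) : ℝ) *
        ((-((v (σ 0)).2.2.2 * (v (σ 1)).1) - L (v (σ 0)) * (v (σ 1)).2.1)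
          - (-((v (σ 1)).2.2.2 * (v (σ 0)).1) - L (v (σ 1)) * (v (σ 0)).2.1))
        * ((v (σ 2)).2.2.1 - p * (v (σ 2)).1 - Fv * (v (σ 2)).2.1)
        * (v (σ 3)).2.2.2)
      = (∑ σ : Equiv.Perm (Fin 4), ((Equiv.Perm.sign σ : ℤ) : ℝ) *
          (-((v (σ 0)).2.2.2)) * (v (σ 1)).1
          * ((v (σ 2)).2.2.1 - p * (v (σ 2)).1 - Fv * (v (σ 2)).2.1) * (v (σ 3)).2.2.2)
      + (∑ σ : Equiv.Perm (Fin 4), ((Equiv.Perm.sign σ : ℤ) : ℝ) *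
          (-(A * (v (σ 0)).1 + B * (v (σ 0)).2.1 + C * (v (σ 0)).2.2.1 + D * (v (σ 0)).2.2.2))
          * (v (σ 1)).2.1
          * ((v (σ 2)).2.2.1 - p * (v (σ 2)).1 - Fv * (v (σ 2)).2.1) * (v (σ 3)).2.2.2)
      + (∑ σ : Equiv.Perm (Fin 4), ((Equiv.Perm.sign σ : ℤ) : ℝ) *
          (v (σ 0)).1 * (v (σ 1)).2.2.2
          * ((v (σ 2)).2.2.1 - p * (v (σ 2)).1 - Fv * (v (σ 2)).2.1) * (v (σ 3)).2.2.2)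
      + (∑ σ : Equiv.Perm (Fin 4), ((Equiv.Perm.sign σ : ℤ) : ℝ) *
          (v (σ 0)).2.1
          * (A * (v (σ 1)).1 + B * (v (σ 1)).2.1 + C * (v (σ 1)).2.2.1 + D * (v (σ 1)).2.2.2)
          * ((v (σ 2)).2.2.1 - p * (v (σ 2)).1 - Fv * (v (σ 2)).2.1) * (v (σ 3)).2.2.2) := by
    rw [← Finset.sum_add_distrib, ← Finset.sum_add_distrib, ← Finset.sum_add_distrib]
    refine Finset.sum_congr rfl fun σ _ => ?_
    rw [hL (v (σ 0)), hL (v (σ 1))]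
    ring
  rw [hsum, E1, E2, E3, E4, E5]
  ring

open Finset in
/-- Wedge product of four 1-forms (given as vector-dependent functions on ℝ⁴),
evaluated at a point on four vectors. -/
noncomputable def wedge4 (α β γ δ : (ℝ × ℝ × ℝ × ℝ) → (ℝ × ℝ × ℝ × ℝ) → ℝ)
    (a : ℝ × ℝ × ℝ × ℝ) (v : Fin 4 → ℝ × ℝ × ℝ × ℝ) : ℝ :=
  ∑ σ : Equiv.Perm (Fin 4),
    ((Equiv.Perm.sign σ : ℤ) : ℝ) * α a (v (σ 0)) * β a (v (σ 1)) * γ a (v (σ 2)) * δ a (v (σ 3))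

open Finset in
/-- Wedge product of a 2-form with two 1-forms, evaluated at a point on four vectors. -/
noncomputable def wedge211 (η : (ℝ × ℝ × ℝ × ℝ) → (ℝ × ℝ × ℝ × ℝ) → (ℝ × ℝ × ℝ × ℝ) → ℝ)
    (β γ : (ℝ × ℝ × ℝ × ℝ) → (ℝ × ℝ × ℝ × ℝ) → ℝ)
    (a : ℝ × ℝ × ℝ × ℝ) (v : Fin 4 → ℝ × ℝ × ℝ × ℝ) : ℝ :=
  (1 / 2) * ∑ σ : Equiv.Perm (Fin 4),
    ((Equiv.Perm.sign σ : ℤ) : ℝ) * η a (v (σ 0)) (v (σ 1)) * β a (v (σ 2)) * γ a (v (σ 3))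

/-- Exterior derivative of a 1-form, evaluated on constant vector fields:
`dω(u,v) = ∂_u(ω(v)) − ∂_v(ω(u))`. -/
noncomputable def dForm (ω : (ℝ × ℝ × ℝ × ℝ) → (ℝ × ℝ × ℝ × ℝ) → ℝ)
    (a u v : ℝ × ℝ × ℝ × ℝ) : ℝ :=
  fderiv ℝ (fun b => ω b v) a u - fderiv ℝ (fun b => ω b u) a v

/-- The integrability obstruction for `z_y = F(x,y,z,z_x)`:
`dω₀¹ ∧ ω₀¹ ∧ ω₀² = −(F_x + p F_z) ω₀¹ ∧ ω₀² ∧ ω₀³ ∧ ω₀⁴`, and the left side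
vanishes identically iff `F_x + p F_z ≡ 0`. -/

theorem integrability_obstruction (F : ℝ → ℝ → ℝ → ℝ → ℝ)
    (hF : ContDiff ℝ (⊤ : ℕ∞) (fun v : ℝ × ℝ × ℝ × ℝ => F v.1 v.2.1 v.2.2.1 v.2.2.2)) :
    -- coordinates a = (x, y, z, p); ω₀¹ = dz − p dx − F dy, ω₀² = dp, ω₀³ = dx, ω₀⁴ = dy
    (∀ (a : ℝ × ℝ × ℝ × ℝ) (v : Fin 4 → ℝ × ℝ × ℝ × ℝ),
      wedge211
          (dForm (fun b w => w.2.2.1 - b.2.2.2 * w.1 - F b.1 b.2.1 b.2.2.1 b.2.2.2 * w.2.1))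
          (fun b w => w.2.2.1 - b.2.2.2 * w.1 - F b.1 b.2.1 b.2.2.1 b.2.2.2 * w.2.1)
          (fun _ w => w.2.2.2) a v
        = -(deriv (fun s => F s a.2.1 a.2.2.1 a.2.2.2) a.1
              + a.2.2.2 * deriv (fun s => F a.1 a.2.1 s a.2.2.2) a.2.2.1)
            * wedge4
                (fun b w => w.2.2.1 - b.2.2.2 * w.1 - F b.1 b.2.1 b.2.2.1 b.2.2.2 * w.2.1)
                (fun _ w => w.2.2.2) (fun _ w => w.1) (fun _ w => w.2.1) a v) ∧
    ((∀ (a : ℝ × ℝ × ℝ × ℝ) (v : Fin 4 → ℝ × ℝ × ℝ × ℝ),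
        wedge211
            (dForm (fun b w => w.2.2.1 - b.2.2.2 * w.1 - F b.1 b.2.1 b.2.2.1 b.2.2.2 * w.2.1))
            (fun b w => w.2.2.1 - b.2.2.2 * w.1 - F b.1 b.2.1 b.2.2.1 b.2.2.2 * w.2.1)
            (fun _ w => w.2.2.2) a v = 0)
      ↔ ∀ x y z p : ℝ,
          deriv (fun s => F s y z p) x + p * deriv (fun s => F x y s p) z = 0) := by
  set G : ℝ × ℝ × ℝ × ℝ → ℝ := fun b => F b.1 b.2.1 b.2.2.1 b.2.2.2 with hG
  have hGd : Differentiable ℝ G := hF.differentiable (by simp)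
  set π : (ℝ × ℝ × ℝ × ℝ) →L[ℝ] ℝ :=
    (ContinuousLinearMap.snd ℝ ℝ ℝ).comp
      ((ContinuousLinearMap.snd ℝ ℝ (ℝ × ℝ)).comp (ContinuousLinearMap.snd ℝ ℝ (ℝ × ℝ × ℝ))) with hπ
  have hω : ∀ (a w u : ℝ × ℝ × ℝ × ℝ),
      fderiv ℝ (fun b => w.2.2.1 - b.2.2.2 * w.1 - F b.1 b.2.1 b.2.2.1 b.2.2.2 * w.2.1) a u
        = -(u.2.2.2 * w.1) - fderiv ℝ G a u * w.2.1 := by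
    intro a w u
    have h1 : HasFDerivAt (fun b : ℝ × ℝ × ℝ × ℝ => b.2.2.2 * w.1) (w.1 • π) a :=
      (π.hasFDerivAt (x := a)).mul_const w.1
    have h2 : HasFDerivAt (fun b => G b * w.2.1) (w.2.1 • fderiv ℝ G a) a :=
      ((hGd a).hasFDerivAt).mul_const w.2.1
    have h3 := ((hasFDerivAt_const (w.2.2.1) a).sub h1).sub h2
    rw [(show HasFDerivAt (fun b : ℝ × ℝ × ℝ × ℝ => w.2.2.1 - b.2.2.2 * w.1 - F b.1 b.2.1 b.2.2.1 b.2.2.2 * w.2.1) _ a from h3).fderiv]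
    simp [hπ]
    ring
  have hA : ∀ a : ℝ × ℝ × ℝ × ℝ,
      deriv (fun s => F s a.2.1 a.2.2.1 a.2.2.2) a.1 = fderiv ℝ G a (1, 0, 0, 0) := by
    intro a
    have hφ : HasDerivAt (fun s : ℝ => ((s, a.2.1, a.2.2.1, a.2.2.2) : ℝ × ℝ × ℝ × ℝ))
        ((1 : ℝ), (0 : ℝ), (0 : ℝ), (0 : ℝ)) a.1 :=
      HasDerivAt.prodMk (hasDerivAt_id a.1) (hasDerivAt_const _ _)
    have h := ((hGd (a.1, a.2.1, a.2.2.1, a.2.2.2)).hasFDerivAt).comp_hasDerivAt a.1 hφ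
    have h2 : a = (a.1, a.2.1, a.2.2.1, a.2.2.2) := rfl
    rw [← h2] at h
    exact h.deriv
  have hC : ∀ a : ℝ × ℝ × ℝ × ℝ,
      deriv (fun s => F a.1 a.2.1 s a.2.2.2) a.2.2.1 = fderiv ℝ G a (0, 0, 1, 0) := by
    intro a
    have hφ : HasDerivAt (fun s : ℝ => ((a.1, a.2.1, s, a.2.2.2) : ℝ × ℝ × ℝ × ℝ))
        ((0 : ℝ), (0 : ℝ), (1 : ℝ), (0 : ℝ)) a.2.2.1 :=
      HasDerivAt.prodMk (hasDerivAt_const _ _) (HasDerivAt.prodMk (hasDerivAt_const _ _)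
        (HasDerivAt.prodMk (hasDerivAt_id _) (hasDerivAt_const _ _)))
    have h := ((hGd (a.1, a.2.1, a.2.2.1, a.2.2.2)).hasFDerivAt).comp_hasDerivAt a.2.2.1 hφ
    have h2 : a = (a.1, a.2.1, a.2.2.1, a.2.2.2) := rfl
    rw [← h2] at h
    exact h.deriv
  have hLlin : ∀ (a u : ℝ × ℝ × ℝ × ℝ), fderiv ℝ G a u
      = u.1 * fderiv ℝ G a (1, 0, 0, 0) + u.2.1 * fderiv ℝ G a (0, 1, 0, 0)
        + u.2.2.1 * fderiv ℝ G a (0, 0, 1, 0) + u.2.2.2 * fderiv ℝ G a (0, 0, 0, 1) := by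
    intro a u
    have hu : u = u.1 • ((1:ℝ), (0:ℝ), (0:ℝ), (0:ℝ)) + u.2.1 • ((0:ℝ), (1:ℝ), (0:ℝ), (0:ℝ))
        + u.2.2.1 • ((0:ℝ), (0:ℝ), (1:ℝ), (0:ℝ)) + u.2.2.2 • ((0:ℝ), (0:ℝ), (0:ℝ), (1:ℝ)) := by
      simp [Prod.ext_iff]
    conv_lhs => rw [hu]
    simp only [map_add, map_smul, smul_eq_mul]
  have h1 : ∀ (a : ℝ × ℝ × ℝ × ℝ) (v : Fin 4 → ℝ × ℝ × ℝ × ℝ),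
      wedge211
          (dForm (fun b w => w.2.2.1 - b.2.2.2 * w.1 - F b.1 b.2.1 b.2.2.1 b.2.2.2 * w.2.1))
          (fun b w => w.2.2.1 - b.2.2.2 * w.1 - F b.1 b.2.1 b.2.2.1 b.2.2.2 * w.2.1)
          (fun _ w => w.2.2.2) a v
        = -(deriv (fun s => F s a.2.1 a.2.2.1 a.2.2.2) a.1
              + a.2.2.2 * deriv (fun s => F a.1 a.2.1 s a.2.2.2) a.2.2.1)
            * wedge4
                (fun b w => w.2.2.1 - b.2.2.2 * w.1 - F b.1 b.2.1 b.2.2.1 b.2.2.2 * w.2.1)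
                (fun _ w => w.2.2.2) (fun _ w => w.1) (fun _ w => w.2.1) a v := by
    intro a v
    have hlin : ∀ u : ℝ × ℝ × ℝ × ℝ, fderiv ℝ G a u
        = (deriv (fun s => F s a.2.1 a.2.2.1 a.2.2.2) a.1) * u.1
          + (fderiv ℝ G a (0, 1, 0, 0)) * u.2.1
          + (deriv (fun s => F a.1 a.2.1 s a.2.2.2) a.2.2.1) * u.2.2.1
          + (fderiv ℝ G a (0, 0, 0, 1)) * u.2.2.2 := by
      intro u
      rw [hLlin a u, hA a, hC a]
      ring
    have := key_alg (fderiv ℝ G a)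
      (deriv (fun s => F s a.2.1 a.2.2.1 a.2.2.2) a.1)
      (fderiv ℝ G a (0, 1, 0, 0))
      (deriv (fun s => F a.1 a.2.1 s a.2.2.2) a.2.2.1)
      (fderiv ℝ G a (0, 0, 0, 1))
      a.2.2.2 (F a.1 a.2.1 a.2.2.1 a.2.2.2) hlin v
    simp only [wedge211, wedge4, dForm, hω]
    exact this
  refine ⟨h1, ?_, ?_⟩
  · intro h0 x y z p
    set bv : Fin 4 → ℝ × ℝ × ℝ × ℝ :=
      ![((0:ℝ), (0:ℝ), (1:ℝ), (0:ℝ)), ((0:ℝ), (0:ℝ), (0:ℝ), (1:ℝ)),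
        ((1:ℝ), (0:ℝ), (0:ℝ), (0:ℝ)), ((0:ℝ), (1:ℝ), (0:ℝ), (0:ℝ))] with hbv
    have h2 := h1 (x, y, z, p) bv
    rw [h0 (x, y, z, p) bv] at h2
    have h3 : wedge4
        (fun b w => w.2.2.1 - b.2.2.2 * w.1 - F b.1 b.2.1 b.2.2.1 b.2.2.2 * w.2.1)
        (fun _ w => w.2.2.2) (fun _ w => w.1) (fun _ w => w.2.1) (x, y, z, p) bv = 1 := by
      rw [wedge4]
      rw [perm4' (fun k => (bv k).2.2.1 - (x, y, z, p).2.2.2 * (bv k).1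
            - F (x, y, z, p).1 (x, y, z, p).2.1 (x, y, z, p).2.2.1 (x, y, z, p).2.2.2 * (bv k).2.1)
          (fun k => (bv k).2.2.2) (fun k => (bv k).1) (fun k => (bv k).2.1)]
      norm_num [hbv, Matrix.cons_val, Matrix.cons_val_two, Matrix.cons_val_three, Matrix.head_cons, Matrix.tail_cons]
    rw [h3] at h2
    simp only at h2
    linarith
  · intro h a v
    rw [h1 a v, h a.1 a.2.1 a.2.2.1 a.2.2.2]
    simp
end

section
/- Let F : ℝ → ℝ be smooth. Suppose there exist constants A, B, C, K, L, M with A ≠ 0 and discriminant condition (B·p + K)² − A(C·p² + 2L·p + M) > 0 on an interval I, and define F(p) := (−(Bp + K) + sqrt((Bp+K)² − A(Cp² + 2Lp + M)))/A on I. Then A·F(p)² + 2B·F(p)·p + C·p² + 2K·F(p) + 2L·p + M = 0 for all p ∈ I, and consequently the Monge invariant 9(F'')² F⁽⁵⁾ − 45 F'' F''' F'''' + 40 (F''')³ vanishes on I wherever F'' ≠ 0. -/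
/-!
Writing `y := A F + B p + K`, the conic relation multiplied by `A` reads `y² = q` with `q` a
quadratic polynomial, so the third, fourth and fifth derivatives of `y²` vanish. By Leibniz'
rule these are three relations among `y, y', …, y⁽⁵⁾` which, as `y ≠ 0`, force
`9 (y'')² y⁽⁵⁾ − 45 y'' y''' y'''' + 40 (y''')³ = 0`; since `y⁽ᵏ⁾ = A F⁽ᵏ⁾` for `k ≥ 2`, this is
`A³` times the Monge invariant of `F`.
-/

open Filter Topology

theorem monge_form_eq_zero_of_sq_derivs_eq_zero {𝕜 : Type*} [Field 𝕜] {y y₁ y₂ y₃ y₄ y₅ : 𝕜}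
    (hy : y ≠ 0) (h₃ : y * y₃ + 3 * y₁ * y₂ = 0) (h₄ : y * y₄ + 4 * y₁ * y₃ + 3 * y₂ ^ 2 = 0)
    (h₅ : y * y₅ + 5 * y₁ * y₄ + 10 * y₂ * y₃ = 0) :
    9 * y₂ ^ 2 * y₅ - 45 * y₂ * y₃ * y₄ + 40 * y₃ ^ 3 = 0 := by
  have e₃ : y₃ = -3 * y₁ * y₂ / y := by field_simp; linear_combination h₃
  have e₄ : y₄ = -(4 * y₁ * y₃ + 3 * y₂ ^ 2) / y := by field_simp; linear_combination h₄
  have e₅ : y₅ = -(5 * y₁ * y₄ + 10 * y₂ * y₃) / y := by field_simp; linear_combination h₅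
  rw [e₅, e₄, e₃]
  field_simp
  ring

section

variable {𝕜 : Type*} [NontriviallyNormedField 𝕜]

theorem iteratedDeriv_quadratic_eq_zero {n : ℕ} (hn : 3 ≤ n) (a b c x : 𝕜) :
    iteratedDeriv n (fun x => a * x ^ 2 + b * x + c) x = 0 := by
  obtain ⟨k, rfl⟩ := Nat.exists_eq_add_of_le hn
  have h₁ : deriv (fun x : 𝕜 => a * x ^ 2 + b * x + c) = fun x => a * (2 * x) + b := by
    ext x
    exact (((hasDerivAt_pow 2 x).const_mul a).add ((hasDerivAt_id x).const_mul b)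
      |>.add_const c).deriv.trans (by simp)
  have h₂ : deriv (fun x : 𝕜 => a * (2 * x) + b) = fun _ => 2 * a := by
    ext x
    exact (((hasDerivAt_id x).const_mul 2).const_mul a |>.add_const b).deriv.trans (by ring)
  rw [add_comm, iteratedDeriv_succ', iteratedDeriv_succ', iteratedDeriv_succ', h₁, h₂]
  simp

theorem iteratedDeriv_const_mul_add_affine {f : 𝕜 → 𝕜} {p : 𝕜} {n : ℕ} (hn : 2 ≤ n)
    (hf : ContDiffAt 𝕜 n f p) (A B K : 𝕜) :
    iteratedDeriv n (fun x => A * f x + B * x + K) p = A * iteratedDeriv n f p := by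
  rw [iteratedDeriv_fun_add (by fun_prop) contDiffAt_const,
    iteratedDeriv_fun_add (by fun_prop) (by fun_prop)]
  obtain ⟨k, rfl⟩ := Nat.exists_eq_add_of_le hn
  simp [iteratedDeriv_const_mul_field, add_comm 2 k, iteratedDeriv_succ']

end

theorem monge_eq_zero_of_mul_self_eventuallyEq_quadratic {f : ℝ → ℝ} {p a b c : ℝ}
    (hf : ContDiffAt ℝ 5 f p) (hp : f p ≠ 0)
    (hq : f * f =ᶠ[𝓝 p] fun x => a * x ^ 2 + b * x + c) : monge f p = 0 := by
  have leibniz {n : ℕ} (hn₃ : 3 ≤ n) (hn₅ : n ≤ 5) :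
      ∑ i ∈ Finset.range (n + 1),
        (n.choose i : ℝ) * iteratedDeriv i f p * iteratedDeriv (n - i) f p = 0 := by
    have hfn : ContDiffAt ℝ n f p := hf.of_le (by exact_mod_cast hn₅)
    rw [← iteratedDeriv_mul hfn hfn, hq.iteratedDeriv_eq]
    exact iteratedDeriv_quadratic_eq_zero hn₃ a b c p
  have h₃ := leibniz (n := 3) le_rfl (by norm_num)
  have h₄ := leibniz (n := 4) (by norm_num) (by norm_num)
  have h₅ := leibniz (n := 5) (by norm_num) le_rfl
  simp only [Finset.sum_range_succ, Finset.sum_range_zero, iteratedDeriv_zero] at h₃ h₄ h₅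
  norm_num [Nat.choose] at h₃ h₄ h₅
  exact monge_form_eq_zero_of_sq_derivs_eq_zero (y₁ := deriv f p) hp
    (by linear_combination h₃ / 2) (by linear_combination h₄ / 2) (by linear_combination h₅ / 2)

theorem monge_const_mul_add_affine {f : ℝ → ℝ} {p : ℝ} (hf : ContDiffAt ℝ 5 f p) (A B K : ℝ) :
    monge (fun x => A * f x + B * x + K) p = A ^ 3 * monge f p := by
  have h {n : ℕ} (hn₂ : 2 ≤ n) (hn₅ : n ≤ 5) :=
    iteratedDeriv_const_mul_add_affine hn₂ (hf.of_le (by exact_mod_cast hn₅)) A B K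
  simp only [monge, h le_rfl (by norm_num), h (n := 3) (by norm_num) (by norm_num),
    h (n := 4) (by norm_num) (by norm_num), h (n := 5) (by norm_num) le_rfl]
  ring

theorem monge_eq_zero_of_eventually_conic {f : ℝ → ℝ} {p A B C K L M : ℝ} (hA : A ≠ 0)
    (hconic : ∀ᶠ x in 𝓝 p,
      A * f x ^ 2 + 2 * B * f x * x + C * x ^ 2 + 2 * K * f x + 2 * L * x + M = 0)
    (hf : ContDiffAt ℝ 5 f p) (hp : A * f p + B * p + K ≠ 0) :
    monge f p = 0 := by
  set y := fun x => A * f x + B * x + K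
  have hy : y * y =ᶠ[𝓝 p]
      fun x => (B ^ 2 - A * C) * x ^ 2 + 2 * (B * K - A * L) * x + (K ^ 2 - A * M) := by
    filter_upwards [hconic] with x hx
    simp only [Pi.mul_apply, y]
    linear_combination A * hx
  have := monge_eq_zero_of_mul_self_eventuallyEq_quadratic (f := y) (by fun_prop) hp hy
  rw [monge_const_mul_add_affine hf] at this
  exact (mul_eq_zero.1 this).resolve_left (pow_ne_zero 3 hA)

/-- Solving the conic relation with `A ≠ 0` by the quadratic formula:
the resulting branch satisfies the conic relation on the interval where the
discriminant is positive, and consequently its Monge invariant vanishes there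
wherever its second derivative is nonzero. -/
theorem quadratic_branch_satisfies_conic_and_monge (A B C K L M : ℝ) (hA : A ≠ 0)
    (I : Set ℝ) (hI : IsOpen I)
    (hdisc : ∀ p ∈ I, 0 < (B * p + K) ^ 2 - A * (C * p ^ 2 + 2 * L * p + M)) :
    ∀ F : ℝ → ℝ,
      F = (fun p => (-(B * p + K)
            + Real.sqrt ((B * p + K) ^ 2 - A * (C * p ^ 2 + 2 * L * p + M))) / A) →
      (∀ p ∈ I,
        A * (F p) ^ 2 + 2 * B * F p * p + C * p ^ 2 + 2 * K * F p + 2 * L * p + M = 0) ∧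
      (∀ p ∈ I, iteratedDeriv 2 F p ≠ 0 → monge F p = 0) := by
  intro F hF
  have conic (p : ℝ) (hp : p ∈ I) :
      A * (F p) ^ 2 + 2 * B * F p * p + C * p ^ 2 + 2 * K * F p + 2 * L * p + M = 0 := by
    have hs := Real.sq_sqrt (hdisc p hp).le
    rw [hF]
    dsimp only
    generalize √((B * p + K) ^ 2 - A * (C * p ^ 2 + 2 * L * p + M)) = s at hs ⊢
    field_simp
    linear_combination hs
  refine ⟨conic, fun p hp _ => monge_eq_zero_of_eventually_conic hA
    (eventually_of_mem (hI.mem_nhds hp) conic) ?_ ?_⟩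
  · rw [hF]
    fun_prop (disch := exact (hdisc p hp).ne')
  · have hy : A * F p + B * p + K = √((B * p + K) ^ 2 - A * (C * p ^ 2 + 2 * L * p + M)) := by
      rw [hF]
      field_simp
      ring
    exact hy ▸ (Real.sqrt_pos.2 (hdisc p hp)).ne'
end
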